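/- Let f be a nonnegative integrable function on [-π, π] that vanishes almost everywhere on {λ : |λ| < α}, where 0 < α < π. Then limsup_{n→∞} (σ_n(f))^{1/n} ≤ cos(α/2), where σ_n²(f) is the minimum of ∫ |q_n(e^{iλ})|² f dλ over polynomials q_n of degree ≤ n with q_n(1)=1. -/

import Mathlib

/-!
The polynomial `q_n(z) = ((z + 1) / 2) ^ n` is admissible and `|q_n(e^{it})| = |cos (t / 2)|^n`,
which is at most `cos (α / 2) ^ n` for `α ≤ |t| ≤ π`. Since `f` vanishes for `|t| < α`, this gives
`σ_n(f) ≤ cos (α / 2) ^ n * √(∫ f)`, and the `n`-th root of the constant tends to `1`.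
-/

open MeasureTheory

/-- The variance of the BLUE: the infimum of `∫ |q(e^{iλ})|² f(λ) dλ` over
polynomials `q` of degree at most `n` with `q(1) = 1`. -/
noncomputable def sigmaSq (h : ℝ → ℝ) (n : ℕ) : ℝ :=
  sInf {v : ℝ | ∃ q : Polynomial ℂ, q.natDegree ≤ n ∧ q.eval 1 = 1 ∧
    v = ∫ t in (-Real.pi)..Real.pi, ‖q.eval (Complex.exp (Complex.I * t))‖ ^ 2 * h t}

open Real Filter Polynomial

lemma Complex.norm_exp_I_mul_ofReal_add_one (t : ℝ) :
    ‖Complex.exp (Complex.I * t) + 1‖ = 2 * |Real.cos (t / 2)| := by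
  have h : Complex.exp (Complex.I * t) + 1 = -(Complex.exp (Complex.I * ↑(t + π)) - 1) := by
    rw [Complex.ofReal_add, mul_add, Complex.exp_add, mul_comm Complex.I (π : ℂ),
      Complex.exp_pi_mul_I]
    ring
  rw [h, norm_neg, Complex.norm_exp_I_mul_ofReal_sub_one, add_div, Real.sin_add_pi_div_two,
    norm_mul, Real.norm_two, Real.norm_eq_abs]

lemma abs_cos_half_le_cos_half {α t : ℝ} (hα : 0 ≤ α) (hαt : α ≤ |t|) (ht : |t| ≤ π) :
    |cos (t / 2)| ≤ cos (α / 2) := by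
  rw [← cos_abs (t / 2), abs_div, abs_two, abs_of_nonneg (cos_nonneg_of_mem_Icc
    ⟨by linarith [abs_nonneg t, pi_pos], by linarith⟩)]
  exact cos_le_cos_of_nonneg_of_le_pi (by linarith) (by linarith) (by linarith)

noncomputable def halfSumPow (n : ℕ) : Polynomial ℂ := (C 2⁻¹ * (X + 1 : Polynomial ℂ)) ^ n

lemma natDegree_halfSumPow_le (n : ℕ) : (halfSumPow n).natDegree ≤ n := by
  unfold halfSumPow
  refine (natDegree_pow_le_of_le n ((natDegree_C_mul_le _ _).trans ?_)).trans_eq (mul_one n)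
  simpa using (natDegree_X_add_C (1 : ℂ)).le

lemma eval_one_halfSumPow (n : ℕ) : (halfSumPow n).eval 1 = 1 := by
  norm_num [halfSumPow]

lemma norm_eval_exp_halfSumPow (n : ℕ) (t : ℝ) :
    ‖(halfSumPow n).eval (Complex.exp (Complex.I * t))‖ = |cos (t / 2)| ^ n := by
  simp only [halfSumPow, eval_pow, eval_mul, eval_C, eval_add, eval_X, eval_one, norm_pow,
    norm_mul, Complex.norm_exp_I_mul_ofReal_add_one]
  norm_num [← mul_assoc]

lemma limsup_rpow_inv_le_of_le_pow_mul {u : ℕ → ℝ} {c K : ℝ} (hu : ∀ n, 0 ≤ u n)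
    (hc : 0 ≤ c) (hK : 0 ≤ K) (h : ∀ n, u n ≤ c ^ n * K) :
    limsup (fun n : ℕ => u n ^ (n : ℝ)⁻¹) atTop ≤ c := by
  -- `K + 1` rather than `K`: the `n`-th roots of `0` do not tend to `1`.
  have hK₁ : 0 < K + 1 := by linarith
  have hbound : ∀ᶠ n : ℕ in atTop, u n ^ (n : ℝ)⁻¹ ≤ c * (K + 1) ^ (n : ℝ)⁻¹ := by
    filter_upwards [eventually_ne_atTop 0] with n hn
    calc u n ^ (n : ℝ)⁻¹ ≤ (c ^ n * (K + 1)) ^ (n : ℝ)⁻¹ := by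
          gcongr
          exacts [hu n, (h n).trans (by gcongr; linarith)]
      _ = c * (K + 1) ^ (n : ℝ)⁻¹ := by
        rw [mul_rpow (by positivity) hK₁.le, pow_rpow_inv_natCast hc hn]
  have hlim : Tendsto (fun n : ℕ => c * (K + 1) ^ (n : ℝ)⁻¹) atTop (nhds c) := by
    simpa [Function.comp_def] using ((continuousAt_const_rpow hK₁.ne').tendsto.comp
      tendsto_inv_atTop_nhds_zero_nat).const_mul c
  calc limsup (fun n : ℕ => u n ^ (n : ℝ)⁻¹) atTop
      ≤ limsup (fun n : ℕ => c * (K + 1) ^ (n : ℝ)⁻¹) atTop :=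
        limsup_le_limsup hbound
          (isCoboundedUnder_le_of_le _ fun n => rpow_nonneg (hu n) _) hlim.isBoundedUnder_le
    _ = c := hlim.limsup_eq

section sigmaSq

variable {f : ℝ → ℝ} {n : ℕ} {q : Polynomial ℂ}

lemma sigmaSq_le_integral (hf0 : ∀ t, 0 ≤ f t) (hq : q.natDegree ≤ n) (hq1 : q.eval 1 = 1) :
    sigmaSq f n ≤ ∫ t in (-π)..π, ‖q.eval (Complex.exp (Complex.I * t))‖ ^ 2 * f t := by
  refine csInf_le ⟨0, ?_⟩ ⟨q, hq, hq1, rfl⟩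
  rintro _ ⟨p, -, -, rfl⟩
  exact intervalIntegral.integral_nonneg (by linarith [pi_pos])
    fun t _ => mul_nonneg (sq_nonneg _) (hf0 t)

lemma sigmaSq_le_sq_mul_integral {α M : ℝ} (hf0 : ∀ t, 0 ≤ f t)
    (hfi : IntervalIntegrable f volume (-π) π) (hvan : ∀ᵐ t ∂volume, |t| < α → f t = 0)
    (hq : q.natDegree ≤ n) (hq1 : q.eval 1 = 1)
    (hM : ∀ t, α ≤ |t| → |t| ≤ π → ‖q.eval (Complex.exp (Complex.I * t))‖ ≤ M) :
    sigmaSq f n ≤ M ^ 2 * ∫ t in (-π)..π, f t := by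
  have hpi : -π ≤ π := by linarith [pi_pos]
  refine (sigmaSq_le_integral hf0 hq hq1).trans ?_
  rw [← intervalIntegral.integral_const_mul]
  refine intervalIntegral.integral_mono_ae_restrict hpi
    (hfi.continuousOn_mul (by fun_prop)) (hfi.const_mul _) ?_
  filter_upwards [ae_restrict_of_ae hvan, ae_restrict_mem measurableSet_Icc]
    with t hvan_t ⟨ht₁, ht₂⟩
  rcases lt_or_ge |t| α with hlt | hge
  · simp [hvan_t hlt]
  · gcongr
    · exact hf0 t
    · exact hM t hge (abs_le.mpr ⟨ht₁, ht₂⟩)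

end sigmaSq

theorem stmt12 (f : ℝ → ℝ) (α : ℝ) (hα : 0 < α) (hαπ : α < Real.pi)
    (hf0 : ∀ t, 0 ≤ f t)
    (hfi : IntervalIntegrable f volume (-Real.pi) Real.pi)
    (hvan : ∀ᵐ t ∂volume, |t| < α → f t = 0) :
    Filter.limsup (fun n : ℕ => (Real.sqrt (sigmaSq f n)) ^ ((n : ℝ)⁻¹)) Filter.atTop
      ≤ Real.cos (α / 2) := by
  have hcos : 0 ≤ cos (α / 2) := cos_nonneg_of_mem_Icc ⟨by linarith, by linarith⟩
  have hσ (n : ℕ) : sigmaSq f n ≤ (cos (α / 2) ^ n) ^ 2 * ∫ t in (-π)..π, f t :=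
    sigmaSq_le_sq_mul_integral hf0 hfi hvan (natDegree_halfSumPow_le n) (eval_one_halfSumPow n)
      fun t hαt htπ => by
        rw [norm_eval_exp_halfSumPow]
        gcongr
        exact abs_cos_half_le_cos_half hα.le hαt htπ
  refine limsup_rpow_inv_le_of_le_pow_mul (fun n => sqrt_nonneg _) hcos
    (sqrt_nonneg (∫ t in (-π)..π, f t)) fun n => ?_
  calc sqrt (sigmaSq f n) ≤ sqrt ((cos (α / 2) ^ n) ^ 2 * ∫ t in (-π)..π, f t) :=
        sqrt_le_sqrt (hσ n)
    _ = cos (α / 2) ^ n * sqrt (∫ t in (-π)..π, f t) := by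
        rw [sqrt_mul (by positivity), sqrt_sq (by positivity)]
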